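/- arXiv:2005.00486 — 4 statements merged into one kernel-verified Lean document; each statement's English description precedes it below -/
import Mathlib

section
/- Let f : V → ℝ be a finite-valued convex function with ‖f‖_{C(B_{R+2})} ≤ c for some R > 0 and c > 0. Then the set K = epi(f*) ∩ {(y,t) : |y| ≤ 2c, |t| ≤ (2R+3)c} is a convex body (compact convex nonempty set) in V* × ℝ, and f(x) = h_K(x,-1) for all x with |x| ≤ R+1, where h_K is the support function of K. -/
lemma sg_exists {V : Type*} [NormedAddCommGroup V] [InnerProductSpace ℝ V]
    [FiniteDimensional ℝ V] (f : V → ℝ) (hf : ConvexOn ℝ Set.univ f) (x0 : V) :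
    ∃ y : V, ∀ a : V, (inner ℝ y a : ℝ) - f a ≤ (inner ℝ y x0 : ℝ) - f x0 := by
  have hcont : Continuous f := by
    rw [← continuousOn_univ]
    exact hf.continuousOn isOpen_univ
  have hSconv : Convex ℝ {p : V × ℝ | f p.1 < p.2} := by
    have := hf.convex_strict_epigraph
    simpa using this
  have hSopen : IsOpen {p : V × ℝ | f p.1 < p.2} :=
    isOpen_lt (hcont.comp continuous_fst) continuous_snd
  have hx0 : (x0, f x0) ∉ {p : V × ℝ | f p.1 < p.2} := by simp
  obtain ⟨l, hl⟩ := geometric_hahn_banach_open_point hSconv hSopen hx0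
  set β := l (0, 1) with hβ
  have hdecomp : ∀ (a : V) (t : ℝ), l (a, t) = l (a, 0) + t * β := by
    intro a t
    have h1 : (a, t) = (a, (0:ℝ)) + t • ((0:V), (1:ℝ)) := by
      simp [Prod.ext_iff]
    rw [h1, map_add, map_smul]
    simp [hβ, smul_eq_mul]
  have hβneg : β < 0 := by
    have h1 := hl (x0, f x0 + 1) (by simp)
    rw [hdecomp x0 (f x0 + 1), hdecomp x0 (f x0)] at h1
    linarith
  have hb : (0:ℝ) < -β := by linarith
  have key : ∀ a : V, l (a, 0) + f a * β ≤ l (x0, 0) + f x0 * β := by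
    intro a
    refine le_of_forall_pos_le_add fun ε hε => ?_
    have h1 := hl (a, f a + ε / (-β)) (by simp [lt_add_iff_pos_right, div_pos hε hb])
    rw [hdecomp a _, hdecomp x0 _] at h1
    have h2 : (f a + ε / (-β)) * β = f a * β - ε := by
      rw [add_mul, div_mul_eq_mul_div, div_neg, mul_div_assoc, div_self hβneg.ne, mul_one]
      ring
    rw [h2] at h1
    linarith
  refine ⟨(InnerProductSpace.toDual ℝ V).symm
    ((-β)⁻¹ • (l.comp (ContinuousLinearMap.inl ℝ V ℝ))), fun a => ?_⟩
  have happ : ∀ z : V, (inner ℝ ((InnerProductSpace.toDual ℝ V).symm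
      ((-β)⁻¹ • (l.comp (ContinuousLinearMap.inl ℝ V ℝ)))) z : ℝ) = (-β)⁻¹ * l (z, 0) := by
    intro z
    rw [InnerProductSpace.toDual_symm_apply]
    simp [ContinuousLinearMap.inl]
  rw [happ a, happ x0]
  have h3 := mul_le_mul_of_nonneg_left (key a) (le_of_lt (inv_pos.2 hb))
  have e : ∀ t : ℝ, (-β)⁻¹ * (t * β) = -t := by
    intro t
    field_simp
    rw [mul_div_cancel_left₀ t hβneg.ne]
  rw [mul_add, mul_add, e, e] at h3
  linarith

/-- If `f : V → ℝ` is convex with `|f| ≤ c` on `B_{R+2}`, then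
`K = epi(f*) ∩ {(y,t) : |y| ≤ 2c, |t| ≤ (2R+3)c}` is a convex body in `V* × ℝ ≅ V × ℝ` and
`f x = h_K(x,-1)` for `|x| ≤ R+1`. -/
theorem stmt8 {V : Type*} [NormedAddCommGroup V] [InnerProductSpace ℝ V]
    [FiniteDimensional ℝ V]
    (f : V → ℝ) (hf : ConvexOn ℝ Set.univ f) (R c : ℝ) (hR : 0 < R) (hc : 0 < c)
    (hbd : ∀ x ∈ Metric.closedBall (0 : V) (R + 2), |f x| ≤ c) :
    IsCompact {p : V × ℝ | (⨆ x : V, ((inner ℝ p.1 x : ℝ) : EReal) - (f x : EReal)) ≤ (p.2 : EReal)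
        ∧ ‖p.1‖ ≤ 2 * c ∧ |p.2| ≤ (2 * R + 3) * c} ∧
    Convex ℝ {p : V × ℝ | (⨆ x : V, ((inner ℝ p.1 x : ℝ) : EReal) - (f x : EReal)) ≤ (p.2 : EReal)
        ∧ ‖p.1‖ ≤ 2 * c ∧ |p.2| ≤ (2 * R + 3) * c} ∧
    {p : V × ℝ | (⨆ x : V, ((inner ℝ p.1 x : ℝ) : EReal) - (f x : EReal)) ≤ (p.2 : EReal)
        ∧ ‖p.1‖ ≤ 2 * c ∧ |p.2| ≤ (2 * R + 3) * c}.Nonempty ∧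
    ∀ x : V, ‖x‖ ≤ R + 1 →
      f x = sSup ((fun p : V × ℝ => (inner ℝ p.1 x : ℝ) - p.2) ''
        {p : V × ℝ | (⨆ z : V, ((inner ℝ p.1 z : ℝ) : EReal) - (f z : EReal)) ≤ (p.2 : EReal)
          ∧ ‖p.1‖ ≤ 2 * c ∧ |p.2| ≤ (2 * R + 3) * c}) := by
  have hKeq : {p : V × ℝ | (⨆ x : V, ((inner ℝ p.1 x : ℝ) : EReal) - (f x : EReal)) ≤ (p.2 : EReal)
        ∧ ‖p.1‖ ≤ 2 * c ∧ |p.2| ≤ (2 * R + 3) * c}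
      = {p : V × ℝ | (∀ x : V, (inner ℝ p.1 x : ℝ) - f x ≤ p.2)
        ∧ ‖p.1‖ ≤ 2 * c ∧ |p.2| ≤ (2 * R + 3) * c} := by
    ext p
    simp only [Set.mem_setOf_eq, iSup_le_iff, ← EReal.coe_sub, EReal.coe_le_coe_iff]
  set K := {p : V × ℝ | (∀ x : V, (inner ℝ p.1 x : ℝ) - f x ≤ p.2)
        ∧ ‖p.1‖ ≤ 2 * c ∧ |p.2| ≤ (2 * R + 3) * c} with hK
  rw [hKeq]
  -- subgradient membership helper
  have hmemK : ∀ x0 : V, ‖x0‖ ≤ R + 1 → ∀ y : V,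
      (∀ a : V, (inner ℝ y a : ℝ) - f a ≤ (inner ℝ y x0 : ℝ) - f x0) →
      (y, (inner ℝ y x0 : ℝ) - f x0) ∈ K := by
    intro x0 hx0 y hy
    have hynorm : ‖y‖ ≤ 2 * c := by
      rcases eq_or_ne y 0 with rfl | hy0
      · simp; positivity
      · have hyn : (0:ℝ) < ‖y‖ := norm_pos_iff.2 hy0
        set u := ‖y‖⁻¹ • y with hu
        have hun : ‖u‖ = 1 := by
          simp [hu, norm_smul, abs_of_nonneg (inv_nonneg.2 hyn.le), inv_mul_cancel₀ hyn.ne']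
        have h1 := hy (x0 + u)
        have hinner : (inner ℝ y (x0 + u) : ℝ) = (inner ℝ y x0 : ℝ) + ‖y‖ := by
          rw [inner_add_right]
          congr 1
          rw [hu, real_inner_smul_right, real_inner_self_eq_norm_sq]
          field_simp
        rw [hinner] at h1
        have hm1 : x0 ∈ Metric.closedBall (0:V) (R+2) := by
          simp only [Metric.mem_closedBall, dist_zero_right]; linarith
        have hm2 : x0 + u ∈ Metric.closedBall (0:V) (R+2) := by
          simp only [Metric.mem_closedBall, dist_zero_right]
          calc ‖x0 + u‖ ≤ ‖x0‖ + ‖u‖ := norm_add_le _ _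
          _ ≤ R + 2 := by rw [hun]; linarith
        have b1 := abs_le.1 (hbd _ hm1)
        have b2 := abs_le.1 (hbd _ hm2)
        linarith
    refine ⟨fun x => hy x, hynorm, ?_⟩
    have hip : |(inner ℝ y x0 : ℝ)| ≤ 2 * c * (R + 1) := by
      calc |(inner ℝ y x0 : ℝ)| ≤ ‖y‖ * ‖x0‖ := abs_real_inner_le_norm _ _
      _ ≤ 2 * c * (R + 1) := by
        apply mul_le_mul hynorm hx0 (norm_nonneg _)
        positivity
    have hm1 : x0 ∈ Metric.closedBall (0:V) (R+2) := by
      simp only [Metric.mem_closedBall, dist_zero_right]; linarith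
    have b1 := abs_le.1 (hbd _ hm1)
    have hip' := abs_le.1 hip
    rw [abs_le]
    dsimp only
    constructor <;> linarith
  refine ⟨?_, ?_, ?_, ?_⟩
  · -- compact
    have hclosed : IsClosed K := by
      have h1 : IsClosed {p : V × ℝ | ∀ x : V, (inner ℝ p.1 x : ℝ) - f x ≤ p.2} := by
        have he : {p : V × ℝ | ∀ x : V, (inner ℝ p.1 x : ℝ) - f x ≤ p.2}
            = ⋂ x : V, {p : V × ℝ | (inner ℝ p.1 x : ℝ) - f x ≤ p.2} := by
          ext p; simp
        rw [he]
        exact isClosed_iInter fun x => isClosed_le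
          (((continuous_fst.inner continuous_const).sub continuous_const)) continuous_snd
      have h2 : IsClosed {p : V × ℝ | ‖p.1‖ ≤ 2 * c} :=
        isClosed_le (continuous_norm.comp continuous_fst) continuous_const
      have h3 : IsClosed {p : V × ℝ | |p.2| ≤ (2 * R + 3) * c} :=
        isClosed_le (continuous_abs.comp continuous_snd) continuous_const
      have : K = {p : V × ℝ | ∀ x : V, (inner ℝ p.1 x : ℝ) - f x ≤ p.2}
          ∩ ({p : V × ℝ | ‖p.1‖ ≤ 2 * c} ∩ {p : V × ℝ | |p.2| ≤ (2 * R + 3) * c}) := by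
        ext p; simp [hK, and_assoc]
      rw [this]
      exact h1.inter (h2.inter h3)
    have hsub : K ⊆ (Metric.closedBall (0:V) (2*c)) ×ˢ (Metric.closedBall (0:ℝ) ((2*R+3)*c)) := by
      rintro p ⟨-, h2, h3⟩
      refine ⟨?_, ?_⟩
      · simpa [Metric.mem_closedBall, dist_zero_right] using h2
      · simpa [Metric.mem_closedBall, dist_zero_right, Real.norm_eq_abs] using h3
    exact ((isCompact_closedBall _ _).prod (isCompact_closedBall _ _)).of_isClosed_subset
      hclosed hsub
  · -- convex
    intro p hp q hq a b ha hb hab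
    obtain ⟨hp1, hp2, hp3⟩ := hp
    obtain ⟨hq1, hq2, hq3⟩ := hq
    refine ⟨fun x => ?_, ?_, ?_⟩
    · have h1 := hp1 x
      have h2 := hq1 x
      have hin : (inner ℝ (a • p + b • q : V × ℝ).1 x : ℝ)
          = a * (inner ℝ p.1 x : ℝ) + b * (inner ℝ q.1 x : ℝ) := by
        simp [inner_add_left, real_inner_smul_left]
      have hsnd : (a • p + b • q : V × ℝ).2 = a * p.2 + b * q.2 := by
        simp [smul_eq_mul]
      rw [hin, hsnd]
      have hfx : a * f x + b * f x = f x := by rw [← add_mul, hab, one_mul]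
      nlinarith [mul_le_mul_of_nonneg_left h1 ha, mul_le_mul_of_nonneg_left h2 hb, hfx]
    · have : (a • p + b • q : V × ℝ).1 = a • p.1 + b • q.1 := rfl
      rw [this]
      calc ‖a • p.1 + b • q.1‖ ≤ ‖a • p.1‖ + ‖b • q.1‖ := norm_add_le _ _
      _ = a * ‖p.1‖ + b * ‖q.1‖ := by
        rw [norm_smul, norm_smul, Real.norm_eq_abs, Real.norm_eq_abs,
          abs_of_nonneg ha, abs_of_nonneg hb]
      _ ≤ a * (2*c) + b * (2*c) := by
        gcongr
      _ = 2 * c := by rw [← add_mul, hab, one_mul]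
    · have hsnd : (a • p + b • q : V × ℝ).2 = a * p.2 + b * q.2 := by
        simp [smul_eq_mul]
      rw [hsnd]
      calc |a * p.2 + b * q.2| ≤ |a * p.2| + |b * q.2| := abs_add_le _ _
      _ = a * |p.2| + b * |q.2| := by
        rw [abs_mul, abs_mul, abs_of_nonneg ha, abs_of_nonneg hb]
      _ ≤ a * ((2*R+3)*c) + b * ((2*R+3)*c) := by gcongr
      _ = (2*R+3)*c := by rw [← add_mul, hab, one_mul]
  · -- nonempty
    obtain ⟨y, hy⟩ := sg_exists f hf 0
    exact ⟨_, hmemK 0 (by simp; linarith) y hy⟩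
  · -- support function formula
    intro x hx
    obtain ⟨y, hy⟩ := sg_exists f hf x
    have hmem := hmemK x hx y hy
    have himg : f x ∈ (fun p : V × ℝ => (inner ℝ p.1 x : ℝ) - p.2) '' K :=
      ⟨(y, (inner ℝ y x : ℝ) - f x), hmem, by ring⟩
    have hub : ∀ r ∈ (fun p : V × ℝ => (inner ℝ p.1 x : ℝ) - p.2) '' K, r ≤ f x := by
      rintro r ⟨p, hp, rfl⟩
      have := hp.1 x
      simp only
      linarith
    exact le_antisymm (le_csSup ⟨f x, hub⟩ himg) (csSup_le ⟨f x, himg⟩ hub)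
end

section
/- Every finite-valued convex function f : V → ℝ is the locally uniform limit of a sequence of functions of the form x ↦ h_{K_j}(x,-1), where K_j are convex bodies in V* × ℝ and h is the support function; that is, the functions {h_K(·,-1) : K convex body in V* × ℝ} are dense in Conv(V,ℝ). -/
open Filter

section Aux

variable {V : Type*} [NormedAddCommGroup V] [InnerProductSpace ℝ V] [FiniteDimensional ℝ V]

local notation "⟪" x ", " y "⟫" => @inner ℝ _ _ x y

/-- Existence of a subgradient at every point for a finite-valued convex function. -/
lemma exists_subgradient (f : V → ℝ) (hf : ConvexOn ℝ Set.univ f) (x₀ : V) :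
    ∃ y : V, ∀ x : V, f x₀ + ⟪y, x - x₀⟫ ≤ f x := by
  have hcont : Continuous f := hf.locallyLipschitz.continuous
  -- strict epigraph
  set S : Set (V × ℝ) := {p : V × ℝ | f p.1 < p.2} with hS
  have hopen : IsOpen S := isOpen_lt (hcont.comp continuous_fst) continuous_snd
  have hconv : Convex ℝ S := by
    intro p hp q hq a b ha hb hab
    simp only [hS, Set.mem_setOf_eq] at hp hq ⊢
    have h1 : f (a • p.1 + b • q.1) ≤ a * f p.1 + b * f q.1 :=
      hf.2 (Set.mem_univ _) (Set.mem_univ _) ha hb hab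
    have h2 : a * f p.1 + b * f q.1 < a * p.2 + b * q.2 := by
      rcases eq_or_lt_of_le ha with h | h
      · have hb1 : b = 1 := by linarith
        simp [← h, hb1, hq]
      · have := mul_le_mul_of_nonneg_left hq.le hb
        have := mul_lt_mul_of_pos_left hp h
        linarith
    calc f ((a • p + b • q).1) = f (a • p.1 + b • q.1) := rfl
      _ < a * p.2 + b * q.2 := lt_of_le_of_lt h1 h2
      _ = (a • p + b • q).2 := rfl
  have hx₀ : (x₀, f x₀) ∉ S := by simp [hS]
  obtain ⟨ℓ, hℓ⟩ := geometric_hahn_banach_point_open hconv hopen hx₀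
  set c : ℝ := ℓ (0, 1) with hc
  have hsplit : ∀ (x : V) (t : ℝ), ℓ (x, t) = ℓ (x, 0) + t * c := by
    intro x t
    have : (x, t) = (x, (0 : ℝ)) + t • ((0 : V), (1 : ℝ)) := by
      simp [Prod.ext_iff]
    rw [this, map_add, map_smul]
    simp [hc, smul_eq_mul]
  have hcpos : 0 < c := by
    have := hℓ (x₀, f x₀ + 1) (by simp [hS])
    rw [hsplit x₀ (f x₀), hsplit x₀ (f x₀ + 1)] at this
    nlinarith
  -- for all x, ℓ (x₀, f x₀) ≤ ℓ (x, 0) + f x * c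
  have hkey : ∀ x : V, ℓ (x₀, f x₀) ≤ ℓ (x, 0) + f x * c := by
    intro x
    apply le_of_forall_pos_le_add
    intro δ hδ
    have hε : (0:ℝ) < δ / c := div_pos hδ hcpos
    have := hℓ (x, f x + δ / c) (by simp [hS, hε])
    rw [hsplit x (f x + δ / c), add_mul, div_mul_cancel₀ _ hcpos.ne'] at this
    linarith
  -- Riesz representation of x ↦ -ℓ(x,0)/c
  set φ : V →L[ℝ] ℝ :=
    (-(c⁻¹)) • (ℓ.comp (ContinuousLinearMap.inl ℝ V ℝ)) with hφ
  refine ⟨(InnerProductSpace.toDual ℝ V).symm φ, fun x => ?_⟩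
  have hy : ∀ z : V, ⟪(InnerProductSpace.toDual ℝ V).symm φ, z⟫ = φ z := fun z =>
    InnerProductSpace.toDual_symm_apply
  rw [inner_sub_right, hy, hy]
  have hφx : ∀ z : V, φ z = -(c⁻¹) * ℓ (z, 0) := by
    intro z; simp [hφ, ContinuousLinearMap.smul_apply]
  rw [hφx, hφx]
  have h1 := hkey x
  rw [hsplit x₀ (f x₀)] at h1
  have h2 : ℓ (x₀, 0) + f x₀ * c - ℓ (x, 0) ≤ f x * c := by linarith
  have h3 : (ℓ (x₀, 0) + f x₀ * c - ℓ (x, 0)) * c⁻¹ ≤ f x * c * c⁻¹ :=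
    mul_le_mul_of_nonneg_right h2 (by positivity)
  rw [mul_inv_cancel_right₀ hcpos.ne'] at h3
  have : (ℓ (x₀, 0)) * c⁻¹ + f x₀ - (ℓ (x, 0)) * c⁻¹ ≤ f x := by
    rw [← mul_inv_cancel_right₀ hcpos.ne' (f x₀)]
    linarith [h3]
  linarith

end Aux

/-- Every finite-valued convex function on `V` is the locally uniform limit of functions of
the form `x ↦ h_{K_j}(x,-1)` for convex bodies `K_j ⊆ V* × ℝ ≅ V × ℝ`. -/
theorem stmt9 {V : Type*} [NormedAddCommGroup V] [InnerProductSpace ℝ V]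
    [FiniteDimensional ℝ V]
    (f : V → ℝ) (hf : ConvexOn ℝ Set.univ f) :
    ∃ K : ℕ → Set (V × ℝ),
      (∀ j, IsCompact (K j) ∧ Convex ℝ (K j) ∧ (K j).Nonempty) ∧
      ∀ A : Set V, IsCompact A →
        TendstoUniformlyOn
          (fun j x => sSup ((fun p : V × ℝ => (inner ℝ p.1 x : ℝ) - p.2) '' K j))
          f atTop A := by
  have hcont : Continuous f := hf.locallyLipschitz.continuous
  choose y hy using exists_subgradient f hf
  -- the subgradient "graph" map
  set Φ : V → V × ℝ := fun x₀ => (y x₀, (inner ℝ (y x₀) x₀ : ℝ) - f x₀) with hΦ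
  set C : ℕ → Set (V × ℝ) := fun j => Φ '' Metric.closedBall 0 j with hC
  set K : ℕ → Set (V × ℝ) := fun j => closure (convexHull ℝ (C j)) with hK
  -- boundedness of C j
  have hbound : ∀ j : ℕ, Bornology.IsBounded (C j) := by
    intro j
    obtain ⟨M, hM⟩ := (isCompact_closedBall (0 : V) (j + 1)).bddAbove_image
      hcont.continuousOn (f := f)
    obtain ⟨m, hm⟩ := (isCompact_closedBall (0 : V) (j + 1)).bddBelow_image
      hcont.continuousOn (f := f)
    have hMval : ∀ x ∈ Metric.closedBall (0 : V) (j + 1), f x ≤ M := fun x hx =>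
      hM (Set.mem_image_of_mem f hx)
    have hmval : ∀ x ∈ Metric.closedBall (0 : V) (j + 1), m ≤ f x := fun x hx =>
      hm (Set.mem_image_of_mem f hx)
    -- norm bound on subgradients
    have hynorm : ∀ x₀ ∈ Metric.closedBall (0 : V) j, ‖y x₀‖ ≤ M - m := by
      intro x₀ hx₀
      have hx₀' : x₀ ∈ Metric.closedBall (0 : V) (j + 1) :=
        Metric.closedBall_subset_closedBall (by linarith) hx₀
      rcases eq_or_ne (y x₀) 0 with h0 | h0
      · simp only [h0, norm_zero]
        linarith [hMval x₀ hx₀', hmval x₀ hx₀']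
      · set u : V := ‖y x₀‖⁻¹ • y x₀ with hu
        have hunorm : ‖u‖ = 1 := norm_smul_inv_norm h0
        have hmem : x₀ + u ∈ Metric.closedBall (0 : V) (j + 1) := by
          rw [Metric.mem_closedBall, dist_zero_right] at hx₀ ⊢
          calc ‖x₀ + u‖ ≤ ‖x₀‖ + ‖u‖ := norm_add_le _ _
            _ ≤ j + 1 := by rw [hunorm]; linarith
        have := hy x₀ (x₀ + u)
        rw [add_sub_cancel_left] at this
        have hin : (inner ℝ (y x₀) u : ℝ) = ‖y x₀‖ := by
          rw [hu, real_inner_smul_right, real_inner_self_eq_norm_sq, sq,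
            inv_mul_cancel_left₀ (norm_ne_zero_iff.2 h0)]
        rw [hin] at this
        linarith [hMval _ hmem, hmval x₀ hx₀']
    rw [isBounded_iff_forall_norm_le]
    refine ⟨max (M - m) ((M - m) * j + max |M| |m|), ?_⟩
    rintro p ⟨x₀, hx₀, rfl⟩
    rw [Prod.norm_def]
    apply max_le
    · exact le_max_of_le_left (hynorm x₀ hx₀)
    · apply le_max_of_le_right
      have hx₀' : x₀ ∈ Metric.closedBall (0 : V) (j + 1) :=
        Metric.closedBall_subset_closedBall (by linarith) hx₀
      have h1 : |(inner ℝ (y x₀) x₀ : ℝ)| ≤ (M - m) * j := by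
        calc |(inner ℝ (y x₀) x₀ : ℝ)| ≤ ‖y x₀‖ * ‖x₀‖ := abs_real_inner_le_norm _ _
          _ ≤ (M - m) * j := by
              apply mul_le_mul (hynorm x₀ hx₀) ?_ (norm_nonneg _) ?_
              · rwa [Metric.mem_closedBall, dist_zero_right] at hx₀
              · linarith [hmval x₀ hx₀', hMval x₀ hx₀']
      have h2 : |f x₀| ≤ max |M| |m| := by
        rcases abs_cases (f x₀) with ⟨he, _⟩ | ⟨he, _⟩ <;> rw [he]
        · exact le_trans (le_trans (hMval x₀ hx₀') (le_abs_self M)) (le_max_left _ _)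
        · refine le_trans ?_ (le_max_right _ _)
          have := hmval x₀ hx₀'
          rcases abs_cases m with ⟨h, _⟩ | ⟨h, _⟩ <;> linarith
      calc |(inner ℝ (y x₀) x₀ : ℝ) - f x₀| ≤ |(inner ℝ (y x₀) x₀ : ℝ)| + |f x₀| := abs_sub _ _
        _ ≤ (M - m) * j + max |M| |m| := add_le_add h1 h2
  have hKcompact : ∀ j, IsCompact (K j) := by
    intro j
    exact (isBounded_convexHull.mpr (hbound j)).isCompact_closure
  have hKelem : ∀ j, IsCompact (K j) ∧ Convex ℝ (K j) ∧ (K j).Nonempty := by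
    intro j
    refine ⟨hKcompact j, (convex_convexHull _ _).closure, ?_⟩
    exact ⟨Φ 0, subset_closure (subset_convexHull _ _ ⟨0, Metric.mem_closedBall_self (by positivity), rfl⟩)⟩
  -- key evaluation: for ‖x‖ ≤ j, the sup equals f x
  have heval : ∀ (j : ℕ) (x : V), x ∈ Metric.closedBall (0 : V) j →
      sSup ((fun p : V × ℝ => (inner ℝ p.1 x : ℝ) - p.2) '' K j) = f x := by
    intro j x hx
    set g : V × ℝ → ℝ := fun p => (inner ℝ p.1 x : ℝ) - p.2 with hg
    have hgcont : Continuous g :=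
      (continuous_fst.inner continuous_const).sub continuous_snd
    -- upper bound on K j
    have hub : ∀ p ∈ K j, g p ≤ f x := by
      have hconvH : Convex ℝ {p : V × ℝ | g p ≤ f x} := by
        intro p hp q hq a b ha hb hab
        simp only [Set.mem_setOf_eq, hg] at hp hq ⊢
        have : (inner ℝ ((a • p + b • q).1) x : ℝ) - (a • p + b • q).2
            = a * ((inner ℝ p.1 x : ℝ) - p.2) + b * ((inner ℝ q.1 x : ℝ) - q.2) := by
          simp only [Prod.fst_add, Prod.snd_add, Prod.smul_fst, Prod.smul_snd,
            inner_add_left, real_inner_smul_left, smul_eq_mul]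
          ring
        rw [this]
        calc a * ((inner ℝ p.1 x : ℝ) - p.2) + b * ((inner ℝ q.1 x : ℝ) - q.2)
            ≤ a * f x + b * f x :=
              add_le_add (mul_le_mul_of_nonneg_left hp ha) (mul_le_mul_of_nonneg_left hq hb)
          _ = f x := by rw [← add_mul, hab, one_mul]
      have hclosedH : IsClosed {p : V × ℝ | g p ≤ f x} :=
        isClosed_le hgcont continuous_const
      have hCsub : C j ⊆ {p : V × ℝ | g p ≤ f x} := by
        rintro p ⟨x₀, _, rfl⟩
        simp only [Set.mem_setOf_eq, hg, hΦ]
        have := hy x₀ x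
        rw [inner_sub_right] at this
        linarith
      intro p hp
      exact (IsClosed.closure_subset_iff hclosedH).mpr (convexHull_min hCsub hconvH) hp
    -- f x is attained
    have hmem : f x ∈ g '' K j := by
      refine ⟨Φ x, subset_closure (subset_convexHull _ _ ⟨x, hx, rfl⟩), ?_⟩
      simp [hg, hΦ]
    have hbdd : BddAbove (g '' K j) := ⟨f x, by rintro r ⟨p, hp, rfl⟩; exact hub p hp⟩
    exact le_antisymm (csSup_le ⟨f x, hmem⟩ (by rintro r ⟨p, hp, rfl⟩; exact hub p hp))
      (le_csSup hbdd hmem)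
  refine ⟨K, hKelem, fun A hA => ?_⟩
  obtain ⟨r, hr⟩ := hA.isBounded.subset_closedBall 0
  rw [Metric.tendstoUniformlyOn_iff]
  intro ε hε
  filter_upwards [eventually_ge_atTop ⌈r⌉₊] with j hj x hxA
  have hx : x ∈ Metric.closedBall (0 : V) j := by
    have := hr hxA
    rw [Metric.mem_closedBall] at this ⊢
    calc dist x 0 ≤ r := this
      _ ≤ ⌈r⌉₊ := Nat.le_ceil r
      _ ≤ j := by exact_mod_cast hj
  rw [heval j x hx, dist_self]
  exact hε
end

section
/- A function on V that is locally convex (every point has a convex open neighborhood on which the function is convex) is convex on V. -/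
/-!
Along the line through `x` and `y`, the difference `φ` between `f` and its chord is again locally
convex, hence continuous, and vanishes at both ends. If `φ` were positive somewhere on `[0, 1]`,
consider the largest point `c` where it attains its maximum: `c` is interior, and local convexity
at `c` bounds `φ c` by the average of `φ (c - δ) ≤ φ c` and `φ (c + δ) < φ c`, a contradiction.
-/

open Set

def IsLocallyConvex (𝕜 : Type*) {E β : Type*} [Semiring 𝕜] [PartialOrder 𝕜] [AddCommMonoid E]
    [TopologicalSpace E] [AddCommMonoid β] [PartialOrder β] [SMul 𝕜 E] [SMul 𝕜 β] (f : E → β) :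
    Prop :=
  ∀ x, ∃ U : Set E, IsOpen U ∧ x ∈ U ∧ Convex 𝕜 U ∧ ConvexOn 𝕜 U f

namespace IsLocallyConvex

theorem comp_affineMap {𝕜 E F β : Type*} [Field 𝕜] [LinearOrder 𝕜]
    [AddCommGroup E] [Module 𝕜 E] [TopologicalSpace E] [AddCommGroup F] [Module 𝕜 F]
    [TopologicalSpace F] [AddCommMonoid β] [PartialOrder β] [SMul 𝕜 β] {f : F → β}
    (hf : IsLocallyConvex 𝕜 f) (g : E →ᵃ[𝕜] F) (hg : Continuous g) :
    IsLocallyConvex 𝕜 (f ∘ g) := fun x ↦ by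
  obtain ⟨U, hU, hxU, hUc, hfU⟩ := hf (g x)
  exact ⟨g ⁻¹' U, hU.preimage hg, hxU, hUc.affine_preimage g, hfU.comp_affineMap g⟩

theorem sub {𝕜 E β : Type*} [Semiring 𝕜] [PartialOrder 𝕜] [AddCommMonoid E] [SMul 𝕜 E]
    [TopologicalSpace E] [AddCommGroup β] [PartialOrder β] [IsOrderedAddMonoid β] [Module 𝕜 β]
    {f g : E → β} (hf : IsLocallyConvex 𝕜 f) (hg : ConcaveOn 𝕜 univ g) :
    IsLocallyConvex 𝕜 (f - g) := fun x ↦ by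
  obtain ⟨U, hU, hxU, hUc, hfU⟩ := hf x
  exact ⟨U, hU, hxU, hUc, hfU.sub (hg.subset (subset_univ U) hUc)⟩

theorem continuous {E : Type*} [NormedAddCommGroup E] [NormedSpace ℝ E] [FiniteDimensional ℝ E]
    {f : E → ℝ} (hf : IsLocallyConvex ℝ f) : Continuous f :=
  continuous_iff_continuousAt.2 fun x ↦ by
    obtain ⟨U, hU, hxU, -, hfU⟩ := hf x
    exact (hfU.continuousOn hU).continuousAt (hU.mem_nhds hxU)

theorem le_max_of_mem_Icc {φ : ℝ → ℝ} (hφ : IsLocallyConvex ℝ φ) {x y t : ℝ} (ht : t ∈ Icc x y) :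
    φ t ≤ max (φ x) (φ y) := by
  obtain ⟨m, hm, hmax⟩ := isCompact_Icc.exists_isMaxOn ⟨t, ht⟩ hφ.continuous.continuousOn
  by_contra! hlt
  have hx : φ x < φ m := (le_max_left _ _).trans_lt (hlt.trans_le (hmax ht))
  have hy : φ y < φ m := (le_max_right _ _).trans_lt (hlt.trans_le (hmax ht))
  obtain ⟨c, ⟨hcI, hcm : φ c = φ m⟩, hc_greatest⟩ :=
    (isCompact_Icc.inter_right (isClosed_singleton.preimage hφ.continuous)).exists_isGreatest
      (⟨m, hm, rfl⟩ : (Icc x y ∩ φ ⁻¹' {φ m}).Nonempty)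
  have hxc : x < c := hcI.1.lt_of_ne fun h ↦ hx.ne (h ▸ hcm)
  have hcy : c < y := hcI.2.lt_of_ne fun h ↦ hy.ne (h ▸ hcm)
  obtain ⟨U, hU, hcU, -, hφU⟩ := hφ c
  obtain ⟨ε, hε, hball⟩ := Metric.isOpen_iff.1 (hU.inter isOpen_Ioo) c ⟨hcU, hxc, hcy⟩
  rw [Real.ball_eq_Ioo] at hball
  have hleft : c - ε / 2 ∈ U ∩ Ioo x y := hball ⟨by linarith, by linarith⟩
  have hright : c + ε / 2 ∈ U ∩ Ioo x y := hball ⟨by linarith, by linarith⟩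
  have hmid : φ c ≤ (φ (c - ε / 2) + φ (c + ε / 2)) / 2 := by
    have half : (0 : ℝ) ≤ 1 / 2 := by norm_num
    have h := hφU.2 hleft.1 hright.1 half half (by norm_num)
    simp only [smul_eq_mul] at h
    rw [show 1 / 2 * (c - ε / 2) + 1 / 2 * (c + ε / 2) = c by ring] at h
    linarith
  have hφleft : φ (c - ε / 2) ≤ φ m := hmax (Ioo_subset_Icc_self hleft.2)
  have hφright : φ (c + ε / 2) < φ m := (hmax (Ioo_subset_Icc_self hright.2)).lt_of_ne fun h ↦ by
    have := hc_greatest ⟨Ioo_subset_Icc_self hright.2, h⟩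
    linarith
  linarith

theorem convexOn_univ {E : Type*} [AddCommGroup E] [Module ℝ E] [TopologicalSpace E]
    [IsTopologicalAddGroup E] [ContinuousSMul ℝ E] {f : E → ℝ} (hf : IsLocallyConvex ℝ f) :
    ConvexOn ℝ univ f := by
  refine ⟨convex_univ, fun x _ y _ a b _ hb hab ↦ ?_⟩
  have hchord : IsLocallyConvex ℝ
      (f ∘ AffineMap.lineMap (k := ℝ) x y - ⇑(AffineMap.lineMap (k := ℝ) (f x) (f y))) :=
    (hf.comp_affineMap _ AffineMap.lineMap_continuous).sub
      ((concaveOn_id convex_univ).comp_affineMap (AffineMap.lineMap (f x) (f y)))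
  have := hchord.le_max_of_mem_Icc (x := 0) (y := 1) ⟨hb, by linarith⟩
  obtain rfl : a = 1 - b := by linarith
  simpa [AffineMap.lineMap_apply_module] using this

end IsLocallyConvex

/-- A locally convex function (every point has a convex open neighborhood on which the
function is convex) on a real normed vector space is convex. -/
theorem stmt12 {V : Type*} [NormedAddCommGroup V] [NormedSpace ℝ V] (f : V → ℝ)
    (hloc : ∀ x : V, ∃ U : Set V, IsOpen U ∧ x ∈ U ∧ Convex ℝ U ∧ ConvexOn ℝ U f) :
    ConvexOn ℝ Set.univ f :=
  IsLocallyConvex.convexOn_univ hloc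
end

section
/- Let U ⊂ V be open convex and f, h : U → ℝ convex. With f̃ denoting the lsc convex extension of f to V (equal to +∞ outside the closure of U and to the liminf on the boundary), the extension commutes with lattice operations: (max(f,h))~ = max(f̃, h̃) and (min(f,h))~ = min(f̃, h̃) whenever min(f,h) is convex. -/
open Filter Topology Classical

/-- The canonical extension of a convex function `f : U → ℝ` to all of `V`:
`f` on `U`, the liminf of `f` along `U` at boundary points, and `+∞` outside `closure U`. -/

noncomputable def extendConv {V : Type*} [TopologicalSpace V] (U : Set V) (f : V → ℝ) :
    V → EReal := fun x =>
  if x ∈ U then (f x : EReal)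
  else if x ∈ closure U then Filter.liminf (fun z => (f z : EReal)) (𝓝[U] x)
  else ⊤

/-- Key lemma: for a convex function on an open convex set, the liminf at a boundary point is
the limit along any segment from an interior point. -/
lemma extendConv_key {V : Type*} [NormedAddCommGroup V] [NormedSpace ℝ V]
    [FiniteDimensional ℝ V]
    (U : Set V) (hUopen : IsOpen U) (hUconv : Convex ℝ U)
    (φ : V → ℝ) (hφ : ConvexOn ℝ U φ) {x₀ : V} (hx₀c : x₀ ∈ closure U)
    {y : V} (hy : y ∈ U) :
    Filter.Tendsto (fun t : ℝ => (φ ((1 - t) • y + t • x₀) : EReal))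
      (𝓝[Set.Ioo (0:ℝ) 1] 1)
      (𝓝 (Filter.liminf (fun z => (φ z : EReal)) (𝓝[U] x₀))) := by
  set γ : ℝ → V := fun t => (1 - t) • y + t • x₀ with hγdef
  set A : EReal := Filter.liminf (fun z => (φ z : EReal)) (𝓝[U] x₀) with hA
  have hFne : (𝓝[U] x₀).NeBot := mem_closure_iff_nhdsWithin_neBot.mp hx₀c
  have hlne : (𝓝[Set.Ioo (0:ℝ) 1] (1:ℝ)).NeBot := by
    refine mem_closure_iff_nhdsWithin_neBot.mp ?_
    rw [closure_Ioo (by norm_num : (0:ℝ) ≠ 1)]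
    exact ⟨le_of_lt one_pos, le_refl 1⟩
  have hγU : ∀ t ∈ Set.Ioo (0:ℝ) 1, γ t ∈ U := by
    intro t ht
    have := hUconv.openSegment_interior_closure_subset_interior
      (by rwa [hUopen.interior_eq]) hx₀c
      (x := y) (y := x₀)
      ⟨1 - t, t, by linarith [ht.2], ht.1, by ring, rfl⟩
    rwa [hUopen.interior_eq] at this
  have hγcont : Continuous γ := by fun_prop
  have hγ1 : γ 1 = x₀ := by simp [hγdef]
  have hγtend : Filter.Tendsto γ (𝓝[Set.Ioo (0:ℝ) 1] 1) (𝓝[U] x₀) := by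
    rw [tendsto_nhdsWithin_iff]
    constructor
    · exact hγ1 ▸ ((hγcont.tendsto 1).mono_left nhdsWithin_le_nhds)
    · exact eventually_nhdsWithin_of_forall hγU
  -- liminf lower bound along the segment
  have hliminf : A ≤ Filter.liminf (fun t => (φ (γ t) : EReal)) (𝓝[Set.Ioo (0:ℝ) 1] 1) := by
    have : Filter.liminf (fun z => (φ z : EReal)) (Filter.map γ (𝓝[Set.Ioo (0:ℝ) 1] 1))
        = Filter.liminf (fun t => (φ (γ t) : EReal)) (𝓝[Set.Ioo (0:ℝ) 1] 1) := rfl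
    rw [← this]
    exact liminf_le_liminf_of_le hγtend
  -- limsup upper bound along the segment
  have hlimsup : Filter.limsup (fun t => (φ (γ t) : EReal)) (𝓝[Set.Ioo (0:ℝ) 1] 1) ≤ A := by
    refine le_of_forall_gt_imp_ge_of_dense ?_
    intro c' hc'
    obtain ⟨c, hAc, hcc'⟩ := EReal.exists_between_coe_real hc'
    refine le_trans ?_ hcc'.le
    have hfreq : ∃ᶠ z in 𝓝[U] x₀, (φ z : EReal) < (c : EReal) :=
      frequently_lt_of_liminf_lt (by isBoundedDefault) hAc
    -- pointwise bound on the segment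
    have hbound : ∀ t ∈ Set.Ioo (0:ℝ) 1, φ (γ t) ≤ (1 - t) * φ y + t * c := by
      intro t ht
      set F' := 𝓝[U] x₀ ⊓ Filter.principal {z | (φ z : EReal) < (c : EReal)} with hF'
      have hF'ne : F'.NeBot := frequently_iff_neBot.mp hfreq
      have hF'le : F' ≤ 𝓝[U] x₀ := inf_le_left
      have hmem : ∀ᶠ z in F', z ∈ U ∧ φ z < c := by
        have h1 : ∀ᶠ z in F', z ∈ U :=
          hF'le self_mem_nhdsWithin
        have h2 : ∀ᶠ z in F', (φ z : EReal) < (c : EReal) := by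
          rw [hF', Filter.eventually_inf_principal]
          exact Filter.Eventually.of_forall fun z hz => hz
        filter_upwards [h1, h2] with z hz1 hz2
        exact ⟨hz1, by exact_mod_cast hz2⟩
      -- the map z ↦ (1-t)•y + t•z tends to γ t within U
      have hmtend : Filter.Tendsto (fun z => (1 - t) • y + t • z) F' (𝓝[U] (γ t)) := by
        rw [tendsto_nhdsWithin_iff]
        constructor
        · have hcont : Continuous (fun z : V => (1 - t) • y + t • z) := by fun_prop
          refine (hcont.tendsto x₀).comp ?_
          exact (hF'le.trans nhdsWithin_le_nhds)
        · filter_upwards [hmem] with z hz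
          exact hUconv hy hz.1 (by linarith [ht.2]) ht.1.le (by ring)
      have hφcont : Filter.Tendsto (fun z => φ ((1 - t) • y + t • z)) F' (𝓝 (φ (γ t))) :=
        ((hφ.continuousOn hUopen (γ t) (hγU t ht)).tendsto).comp hmtend
      have hev : ∀ᶠ z in F', φ ((1 - t) • y + t • z) ≤ (1 - t) * φ y + t * c := by
        filter_upwards [hmem] with z hz
        calc φ ((1 - t) • y + t • z) ≤ (1 - t) * φ y + t * φ z :=
              hφ.2 hy hz.1 (by linarith [ht.2]) ht.1.le (by ring)
          _ ≤ (1 - t) * φ y + t * c := by nlinarith [hz.2, ht.1]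
      exact le_of_tendsto hφcont hev
    -- pass to the limsup
    have hRHS : Filter.Tendsto (fun t : ℝ => (((1 - t) * φ y + t * c : ℝ) : EReal))
        (𝓝[Set.Ioo (0:ℝ) 1] 1) (𝓝 (c : EReal)) := by
      have : Filter.Tendsto (fun t : ℝ => (1 - t) * φ y + t * c) (𝓝[Set.Ioo (0:ℝ) 1] 1)
          (𝓝 c) := by
        have hc : Filter.Tendsto (fun t : ℝ => (1 - t) * φ y + t * c) (𝓝 1)
            (𝓝 ((1 - 1) * φ y + 1 * c)) :=
          Continuous.tendsto (by continuity) 1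
        simpa using hc.mono_left nhdsWithin_le_nhds
      exact (continuous_coe_real_ereal.tendsto c).comp this
    calc Filter.limsup (fun t => (φ (γ t) : EReal)) (𝓝[Set.Ioo (0:ℝ) 1] 1)
        ≤ Filter.limsup (fun t : ℝ => (((1 - t) * φ y + t * c : ℝ) : EReal))
            (𝓝[Set.Ioo (0:ℝ) 1] 1) := by
          refine limsup_le_limsup ?_
          filter_upwards [eventually_nhdsWithin_of_forall hbound] with t ht
          exact_mod_cast ht
      _ = (c : EReal) := hRHS.limsup_eq
  exact tendsto_of_le_liminf_of_limsup_le hliminf hlimsup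

/-- The lsc convex extension commutes with lattice operations: the extension of the pointwise
maximum of two convex functions on `U` is the pointwise maximum of their extensions, and the
same holds for the minimum whenever the minimum is convex. -/
theorem stmt17 {V : Type*} [NormedAddCommGroup V] [NormedSpace ℝ V] [FiniteDimensional ℝ V]
    (U : Set V) (hUopen : IsOpen U) (hUconv : Convex ℝ U)
    (f h : V → ℝ) (hf : ConvexOn ℝ U f) (hh : ConvexOn ℝ U h) :
    (extendConv U (fun x => max (f x) (h x)) =
      fun x => extendConv U f x ⊔ extendConv U h x) ∧
    (ConvexOn ℝ U (fun x => min (f x) (h x)) →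
      extendConv U (fun x => min (f x) (h x)) =
        fun x => extendConv U f x ⊓ extendConv U h x) := by
  have coe_max : ∀ a b : ℝ, ((max a b : ℝ) : EReal) = max (a : EReal) (b : EReal) := by
    intro a b
    exact (EReal.coe_strictMono.monotone.map_max)
  have coe_min : ∀ a b : ℝ, ((min a b : ℝ) : EReal) = min (a : EReal) (b : EReal) := by
    intro a b
    exact (EReal.coe_strictMono.monotone.map_min)
  have key : ∀ (g : V → ℝ), ConvexOn ℝ U g → ∀ x₀ ∈ closure U, ∀ y ∈ U,
      Filter.Tendsto (fun t : ℝ => (g ((1 - t) • y + t • x₀) : EReal))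
        (𝓝[Set.Ioo (0:ℝ) 1] 1)
        (𝓝 (Filter.liminf (fun z => (g z : EReal)) (𝓝[U] x₀))) := by
    intro g hg x₀ hx₀ y hy
    exact extendConv_key U hUopen hUconv g hg hx₀ hy
  have hlne : (𝓝[Set.Ioo (0:ℝ) 1] (1:ℝ)).NeBot := by
    refine mem_closure_iff_nhdsWithin_neBot.mp ?_
    rw [closure_Ioo (by norm_num : (0:ℝ) ≠ 1)]
    exact ⟨le_of_lt one_pos, le_refl 1⟩
  constructor
  · funext x
    unfold extendConv
    by_cases hxU : x ∈ U
    · simp only [hxU, if_pos]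
      exact coe_max (f x) (h x)
    · by_cases hxc : x ∈ closure U
      · simp only [hxU, if_neg, not_false_iff, hxc, if_pos]
        obtain ⟨y, hy⟩ : U.Nonempty := by
          rcases U.eq_empty_or_nonempty with hU | hU
          · exfalso; rw [hU, closure_empty] at hxc; exact hxc
          · exact hU
        have h1 := key f hf x hxc y hy
        have h2 := key h hh x hxc y hy
        have h3 := key (fun z => max (f z) (h z)) (hf.sup hh) x hxc y hy
        have h3' : Filter.Tendsto
            (fun t : ℝ => (max (f ((1 - t) • y + t • x) : EReal)
              (h ((1 - t) • y + t • x) : EReal)))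
            (𝓝[Set.Ioo (0:ℝ) 1] 1)
            (𝓝 (Filter.liminf (fun z => ((max (f z) (h z) : ℝ) : EReal)) (𝓝[U] x))) := by
          refine h3.congr fun t => ?_
          exact coe_max _ _
        exact tendsto_nhds_unique h3' (h1.max h2)
      · simp only [hxU, if_neg, not_false_iff, hxc]
        simp
  · intro hmin
    funext x
    unfold extendConv
    by_cases hxU : x ∈ U
    · simp only [hxU, if_pos]
      exact coe_min (f x) (h x)
    · by_cases hxc : x ∈ closure U
      · simp only [hxU, if_neg, not_false_iff, hxc, if_pos]
        obtain ⟨y, hy⟩ : U.Nonempty := by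
          rcases U.eq_empty_or_nonempty with hU | hU
          · exfalso; rw [hU, closure_empty] at hxc; exact hxc
          · exact hU
        have h1 := key f hf x hxc y hy
        have h2 := key h hh x hxc y hy
        have h3 := key (fun z => min (f z) (h z)) hmin x hxc y hy
        have h3' : Filter.Tendsto
            (fun t : ℝ => (min (f ((1 - t) • y + t • x) : EReal)
              (h ((1 - t) • y + t • x) : EReal)))
            (𝓝[Set.Ioo (0:ℝ) 1] 1)
            (𝓝 (Filter.liminf (fun z => ((min (f z) (h z) : ℝ) : EReal)) (𝓝[U] x))) := by
          refine h3.congr fun t => ?_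
          exact coe_min _ _
        exact tendsto_nhds_unique h3' (h1.min h2)
      · simp only [hxU, if_neg, not_false_iff, hxc]
        simp
end
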